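/- arXiv:1010.3471 — 2 statements merged into one kernel-verified Lean document; each statement's English description precedes it below -/
import Mathlib

section
/- The map M_p : (z_1, ..., z_p) ↦ (z_1, z_1² z_2, z_1² z_2² z_3, ..., z_1² ··· z_{p−1}² z_p) satisfies dM_p · Ω^{mk}_p · (dM_p)^T = Ω^{sG}_p|_{f = M_p(z)}, hence is a Poisson map: {g∘M_p, h∘M_p}_z = {g,h}_f evaluated at f = M_p(z). -/
open Matrix

/-- Poisson-type bracket associated with a matrix `Ω`:
`{g,h} = ∇g · Ω · (∇h)ᵀ = Σ_{i,j} Ω_{ij} ∂g/∂x_i ∂h/∂x_j`. -/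
noncomputable def gradBracket {m : ℕ} (Ω : Matrix (Fin m) (Fin m) ℝ)
    (g h : (Fin m → ℝ) → ℝ) (x : Fin m → ℝ) : ℝ :=
  ∑ i, ∑ j, Ω i j * fderiv ℝ g x (Pi.single i 1) * fderiv ℝ h x (Pi.single j 1)

/-- `M_p : (z_1, …, z_p) ↦ (z_1, z_1² z_2, …, z_1² ⋯ z_{p−1}² z_p)`. -/
def Mmap (p : ℕ) (z : Fin p → ℝ) (i : Fin p) : ℝ :=
  (∏ j ∈ Finset.univ.filter (· < i), (z j) ^ 2) * z i

/-- `Ω^{mk}_p`: antisymmetric, `(i,j)`-entry `(−1)^{j−i+1} z_i z_j` for `j > i`. -/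
noncomputable def OmegaMK (p : ℕ) (z : Fin p → ℝ) : Matrix (Fin p) (Fin p) ℝ := fun i j =>
  if i < j then (-1 : ℝ) ^ ((j : ℕ) - i + 1) * (z i * z j)
  else if j < i then -((-1 : ℝ) ^ ((i : ℕ) - j + 1) * (z i * z j))
  else 0

/-- `Ω^{sG}_p`: antisymmetric, `(i,j)`-entry `f_i f_j` for `j > i`. -/
def OmegaSG (p : ℕ) (f : Fin p → ℝ) : Matrix (Fin p) (Fin p) ℝ := fun i j =>
  if i < j then f i * f j else if j < i then -(f i * f j) else 0

/-- The Jacobian matrix of `M_p`: `0` above the diagonal, `Π_{k<i} z_k²` on the diagonal and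
`2 z_i z_j^{-1} Π_{k<i} z_k²` below it. -/
noncomputable def dMmap (p : ℕ) (z : Fin p → ℝ) : Matrix (Fin p) (Fin p) ℝ := fun i j =>
  if i = j then ∏ k ∈ Finset.univ.filter (· < i), (z k) ^ 2
  else if j < i then 2 * z i * (z j)⁻¹ * ∏ k ∈ Finset.univ.filter (· < i), (z k) ^ 2
  else 0

/-!
Each coordinate of `M_p` is a monomial, `M_p(z)_a = ∏_j z_j ^ e_{aj}` with `e_{aj} = 2, 1, 0`
for `j < a`, `j = a`, `j > a`, so its Jacobian is `diag(M_p z) · E · diag(z)⁻¹`. Both structure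
matrices are diagonal rescalings of the sign matrix `T = Ω^{sG}_p(1)`:
`Ω^{sG}_p(f) = diag(f) T diag(f)` and `Ω^{mk}_p(z) = -diag(w) T diag(w)` with `w_i = (-1)^i z_i`.
The matrix identity therefore reduces to `B T Bᵀ = -T` for the integer matrix
`B_{aj} = (-1)^j e_{aj}`, an alternating-sum computation: every row of `B` sums to `1`, and
`(T Bᵀ)_{ib} = -1` for `i < b`. The Poisson property then follows from the chain rule
`∇(g ∘ M_p) = dM_pᵀ ∇g`.
-/

theorem dotProduct_mulVec_conj {n R : Type*} [Fintype n] [CommSemiring R] (A Ω : Matrix n n R)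
    (u v : n → R) : (Aᵀ *ᵥ u) ⬝ᵥ (Ω *ᵥ (Aᵀ *ᵥ v)) = u ⬝ᵥ ((A * Ω * Aᵀ) *ᵥ v) := by
  rw [mulVec_transpose, ← dotProduct_mulVec, mulVec_mulVec, mulVec_mulVec, Matrix.mul_assoc]

section Bracket

variable {m : ℕ}

noncomputable def coordGrad (g : (Fin m → ℝ) → ℝ) (x : Fin m → ℝ) : Fin m → ℝ :=
  fun i => fderiv ℝ g x (Pi.single i 1)

theorem gradBracket_eq_dotProduct (Ω : Matrix (Fin m) (Fin m) ℝ) (g h : (Fin m → ℝ) → ℝ)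
    (x : Fin m → ℝ) : gradBracket Ω g h x = coordGrad g x ⬝ᵥ (Ω *ᵥ coordGrad h x) := by
  simp only [gradBracket, coordGrad, dotProduct, mulVec, Finset.mul_sum]
  exact Finset.sum_congr rfl fun i _ => Finset.sum_congr rfl fun j _ => by ring

theorem coordGrad_comp {F : (Fin m → ℝ) → Fin m → ℝ} {A : Matrix (Fin m) (Fin m) ℝ}
    {g : (Fin m → ℝ) → ℝ} {x : Fin m → ℝ}
    (hF : HasFDerivAt F (toLin' A).toContinuousLinearMap x) (hg : DifferentiableAt ℝ g (F x)) :
    coordGrad (fun w => g (F w)) x = Aᵀ *ᵥ coordGrad g (F x) := by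
  ext i
  have hcol : A *ᵥ Pi.single i 1 = ∑ a, A a i • Pi.single a 1 := by
    rw [mulVec_single_one]
    conv_lhs => rw [← Finset.univ_sum_single (A.col i)]
    simp [← Pi.single_smul]
  have hcomp : HasFDerivAt (fun w => g (F w))
      ((fderiv ℝ g (F x)).comp (toLin' A).toContinuousLinearMap) x :=
    hg.hasFDerivAt.comp x hF
  rw [coordGrad, hcomp.fderiv]
  simp [hcol, coordGrad, mulVec, dotProduct]

theorem gradBracket_comp {F : (Fin m → ℝ) → Fin m → ℝ} {A : Matrix (Fin m) (Fin m) ℝ}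
    {x : Fin m → ℝ} (hF : HasFDerivAt F (toLin' A).toContinuousLinearMap x)
    (Ω : Matrix (Fin m) (Fin m) ℝ) {g h : (Fin m → ℝ) → ℝ}
    (hg : DifferentiableAt ℝ g (F x)) (hh : DifferentiableAt ℝ h (F x)) :
    gradBracket Ω (fun w => g (F w)) (fun w => h (F w)) x =
      gradBracket (A * Ω * Aᵀ) g h (F x) := by
  rw [gradBracket_eq_dotProduct, gradBracket_eq_dotProduct, coordGrad_comp hF hg,
    coordGrad_comp hF hh, dotProduct_mulVec_conj]

end Bracket

theorem hasFDerivAt_prod_pow {𝕜 ι : Type*} [NontriviallyNormedField 𝕜] [Fintype ι]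
    [DecidableEq ι] (e : ι → ℕ) {z : ι → 𝕜} (hz : ∀ j, z j ≠ 0) :
    HasFDerivAt (fun w : ι → 𝕜 => ∏ j, w j ^ e j)
      (∑ j, (e j * (∏ k, z k ^ e k) / z j) •
        (ContinuousLinearMap.proj j : (ι → 𝕜) →L[𝕜] 𝕜)) z := by
  refine (HasFDerivAt.finsetProd fun j _ => (hasFDerivAt_apply j z).pow (e j)).congr_fderiv ?_
  refine Finset.sum_congr rfl fun j _ => ?_
  rw [smul_smul, ← Finset.mul_prod_erase _ _ (Finset.mem_univ j)]
  congr 1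
  cases e j with
  | zero => simp
  | succ n =>
    rw [pow_succ]
    field_simp [hz j]
    simp [mul_assoc]

def MmapExponent (a j : ℕ) : ℕ := if j = a then 1 else if j < a then 2 else 0

theorem Mmap_eq_prod_pow (p : ℕ) (w : Fin p → ℝ) (a : Fin p) :
    Mmap p w a = ∏ j, w j ^ MmapExponent a j := by
  have hsplit : ∀ j : Fin p, w j ^ MmapExponent a j
      = (if j = a then w j else 1) * (if j < a then w j ^ 2 else 1) := by
    intro j
    rcases lt_trichotomy j a with h | rfl | h
    · simp [MmapExponent, h, h.ne, Fin.val_ne_of_ne h.ne, Fin.lt_def.1 h]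
    · simp [MmapExponent]
    · simp [MmapExponent, h.ne', not_lt.2 h.le, Fin.val_ne_of_ne h.ne']
  rw [Finset.prod_congr rfl fun j _ => hsplit j, Finset.prod_mul_distrib, Finset.prod_ite_eq',
    ← Finset.prod_filter, Mmap]
  simp [mul_comm]

theorem dMmap_apply {p : ℕ} {z : Fin p → ℝ} (hz : ∀ i, z i ≠ 0) (a j : Fin p) :
    dMmap p z a j = MmapExponent a j * Mmap p z a / z j := by
  rcases lt_trichotomy j a with h | rfl | h
  · simp [dMmap, MmapExponent, Mmap, h, h.ne', Fin.val_ne_of_ne h.ne]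
    field_simp
  · simp [dMmap, MmapExponent, Mmap, hz]
  · simp [dMmap, MmapExponent, Mmap, h.ne, not_lt.2 h.le, Fin.val_ne_of_ne h.ne']

theorem hasFDerivAt_Mmap {p : ℕ} {z : Fin p → ℝ} (hz : ∀ i, z i ≠ 0) :
    HasFDerivAt (Mmap p) (toLin' (dMmap p z)).toContinuousLinearMap z := by
  refine hasFDerivAt_pi'.2 fun a => ?_
  simp_rw [Mmap_eq_prod_pow]
  refine (hasFDerivAt_prod_pow _ hz).congr_fderiv ?_
  ext v
  simp [mulVec, dotProduct, dMmap_apply hz, ← Mmap_eq_prod_pow, mul_comm]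

noncomputable def signDiff (i j : ℕ) : ℝ := if i < j then 1 else if j < i then -1 else 0

theorem sum_range_neg_one_pow_mul_MmapExponent (a n : ℕ) :
    ∑ j ∈ Finset.range n, (-1 : ℝ) ^ j * MmapExponent a j =
      if n ≤ a then 1 - (-1) ^ n else 1 := by
  induction n with
  | zero => simp
  | succ n ih =>
    rw [Finset.sum_range_succ, ih]
    rcases lt_trichotomy n a with h | rfl | h
    · simp [MmapExponent, h, h.ne, h.le, Nat.succ_le_of_lt h, pow_succ]
      ring
    · simp [MmapExponent]
    · simp [MmapExponent, h.ne', not_lt.2 h.le, not_le.2 h, not_le.2 (Nat.lt_succ_of_lt h)]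

theorem sum_range_signDiff_mul {i n : ℕ} (x : ℕ → ℝ) (hin : i < n) :
    ∑ j ∈ Finset.range n, signDiff i j * x j
      = ∑ j ∈ Finset.range n, x j - ∑ j ∈ Finset.range (i + 1), x j
        - ∑ j ∈ Finset.range i, x j := by
  have hprefix : ∀ k ≤ n, ∑ j ∈ Finset.range k, x j
      = ∑ j ∈ Finset.range n, if j < k then x j else 0 := by
    intro k hk
    rw [← Finset.sum_filter]
    congr 1
    ext j
    simp only [Finset.mem_range, Finset.mem_filter]
    omega
  rw [hprefix (i + 1) hin, hprefix i hin.le, ← Finset.sum_sub_distrib, ← Finset.sum_sub_distrib]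
  refine Finset.sum_congr rfl fun j _ => ?_
  unfold signDiff
  split_ifs <;> first | omega | ring

theorem sum_range_signDiff_mul_signedExponent {i b n : ℕ} (hib : i < b) (hbn : b < n) :
    ∑ j ∈ Finset.range n, signDiff i j * ((-1) ^ j * MmapExponent b j) = -1 := by
  rw [sum_range_signDiff_mul _ (hib.trans hbn), sum_range_neg_one_pow_mul_MmapExponent,
    sum_range_neg_one_pow_mul_MmapExponent, sum_range_neg_one_pow_mul_MmapExponent,
    if_neg (not_le.2 hbn), if_pos (Nat.succ_le_of_lt hib), if_pos hib.le, pow_succ]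
  ring

theorem sum_range_signedExponent_mul_signDiff_mul {a b n : ℕ} (hab : a < b) (hbn : b < n) :
    ∑ i ∈ Finset.range n, ∑ j ∈ Finset.range n,
      (-1) ^ i * (MmapExponent a i : ℝ) * signDiff i j * ((-1) ^ j * MmapExponent b j) = -1 := by
  have hrow : ∀ i ∈ Finset.range n, ∑ j ∈ Finset.range n,
      (-1) ^ i * (MmapExponent a i : ℝ) * signDiff i j * ((-1) ^ j * MmapExponent b j)
        = (-1) ^ i * MmapExponent a i * (-1) := by
    intro i _
    by_cases hia : i ≤ a
    · simp_rw [mul_assoc, ← Finset.mul_sum]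
      rw [sum_range_signDiff_mul_signedExponent (hia.trans_lt hab) hbn]
    · simp [MmapExponent, (Nat.lt_of_not_le hia).ne', not_lt.2 (not_le.1 hia).le]
  rw [Finset.sum_congr rfl hrow, ← Finset.sum_mul, sum_range_neg_one_pow_mul_MmapExponent,
    if_neg (not_le.2 (hab.trans hbn))]
  ring

theorem Matrix.ext_of_transpose_eq_neg {n R : Type*} [LinearOrder n] [AddCommGroup R]
    [IsAddTorsionFree R] {X Y : Matrix n n R} (hX : Xᵀ = -X) (hY : Yᵀ = -Y)
    (h : ∀ a b, a < b → X a b = Y a b) : X = Y := by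
  have hX' : ∀ a b, X b a = -X a b := fun a b => congr_fun (congr_fun hX a) b
  have hY' : ∀ a b, Y b a = -Y a b := fun a b => congr_fun (congr_fun hY a) b
  ext a b
  rcases lt_trichotomy a b with hab | rfl | hab
  · exact h a b hab
  · rw [self_eq_neg.1 (hX' a a), self_eq_neg.1 (hY' a a)]
  · rw [hX', hY', h b a hab]

theorem OmegaSG_transpose (p : ℕ) (f : Fin p → ℝ) : (OmegaSG p f)ᵀ = -OmegaSG p f := by
  ext i j
  rcases lt_trichotomy i j with h | rfl | h
  · simp [OmegaSG, h, lt_asymm h, mul_comm]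
  · simp [OmegaSG]
  · simp [OmegaSG, h, lt_asymm h, mul_comm]

theorem OmegaSG_eq_diagonal (p : ℕ) (f : Fin p → ℝ) :
    OmegaSG p f = diagonal f * OmegaSG p 1 * diagonal f := by
  ext i j
  simp only [OmegaSG, diagonal_mul, mul_diagonal, Pi.one_apply]
  split_ifs <;> ring

theorem neg_one_pow_sub_add_one {R : Type*} [CommRing R] {i j : ℕ} (h : i ≤ j) :
    (-1 : R) ^ (j - i + 1) = -((-1) ^ i * (-1) ^ j) := by
  obtain ⟨k, rfl⟩ := Nat.exists_eq_add_of_le h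
  have hsq : (-1 : R) ^ i * (-1) ^ i = 1 := by rw [← mul_pow, neg_one_mul, neg_neg, one_pow]
  rw [Nat.add_sub_cancel_left, pow_add, pow_add, pow_one]
  linear_combination (-1 : R) ^ k * hsq

def alternate {p : ℕ} (z : Fin p → ℝ) : Fin p → ℝ := fun i => (-1) ^ (i : ℕ) * z i

theorem OmegaMK_eq_diagonal (p : ℕ) (z : Fin p → ℝ) :
    OmegaMK p z = -(diagonal (alternate z) * OmegaSG p 1 * diagonal (alternate z)) := by
  ext i j
  simp only [OmegaMK, OmegaSG, alternate, Matrix.neg_apply, diagonal_mul, mul_diagonal,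
    Pi.one_apply]
  split_ifs with hij hji
  · rw [neg_one_pow_sub_add_one hij.le]; ring
  · rw [neg_one_pow_sub_add_one hji.le]; ring
  · ring

noncomputable def signedExponentMatrix (p : ℕ) : Matrix (Fin p) (Fin p) ℝ :=
  of fun a j => (-1) ^ (j : ℕ) * MmapExponent a j

theorem dMmap_mul_diagonal_alternate {p : ℕ} {z : Fin p → ℝ} (hz : ∀ i, z i ≠ 0) :
    dMmap p z * diagonal (alternate z) = diagonal (Mmap p z) * signedExponentMatrix p := by
  ext a j
  simp only [dMmap_apply hz, signedExponentMatrix, alternate, diagonal_mul, mul_diagonal, of_apply]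
  field_simp [hz j]

theorem signedExponentMatrix_mul_OmegaSG_one_mul_transpose (p : ℕ) :
    signedExponentMatrix p * OmegaSG p 1 * (signedExponentMatrix p)ᵀ = -OmegaSG p 1 := by
  refine ext_of_transpose_eq_neg ?_ (by rw [transpose_neg, OmegaSG_transpose, neg_neg])
    fun a b hab => ?_
  · rw [transpose_mul, transpose_mul, transpose_transpose, OmegaSG_transpose]
    simp only [Matrix.neg_mul, Matrix.mul_neg, Matrix.mul_assoc]
  have hT : ∀ i j : Fin p, OmegaSG p 1 i j = signDiff i j := by
    intro i j
    simp [OmegaSG, signDiff]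
  have hentry : (signedExponentMatrix p * OmegaSG p 1 * (signedExponentMatrix p)ᵀ) a b
      = ∑ i ∈ Finset.range p, ∑ j ∈ Finset.range p,
          (-1) ^ i * (MmapExponent a i : ℝ) * signDiff i j * ((-1) ^ j * MmapExponent b j) := by
    simp only [mul_apply, transpose_apply, Finset.sum_mul, signedExponentMatrix, of_apply, hT]
    rw [Finset.sum_comm, ← Fin.sum_univ_eq_sum_range]
    exact Finset.sum_congr rfl fun i _ => Fin.sum_univ_eq_sum_range
      (fun j => (-1) ^ (i : ℕ) * (MmapExponent a i : ℝ) * signDiff i j *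
        ((-1) ^ j * MmapExponent b j)) p
  rw [hentry, sum_range_signedExponent_mul_signDiff_mul hab b.isLt]
  simp [OmegaSG, hab]

theorem dMmap_mul_OmegaMK_mul_transpose {p : ℕ} {z : Fin p → ℝ} (hz : ∀ i, z i ≠ 0) :
    dMmap p z * OmegaMK p z * (dMmap p z)ᵀ = OmegaSG p (Mmap p z) := by
  rw [OmegaMK_eq_diagonal, OmegaSG_eq_diagonal _ (Mmap p z)]
  calc dMmap p z * -(diagonal (alternate z) * OmegaSG p 1 * diagonal (alternate z)) *
        (dMmap p z)ᵀ
    _ = -((dMmap p z * diagonal (alternate z)) * OmegaSG p 1 *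
          (dMmap p z * diagonal (alternate z))ᵀ) := by
        simp only [transpose_mul, diagonal_transpose, Matrix.mul_neg, Matrix.neg_mul,
          Matrix.mul_assoc]
    _ = -(diagonal (Mmap p z) *
          (signedExponentMatrix p * OmegaSG p 1 * (signedExponentMatrix p)ᵀ) *
          diagonal (Mmap p z)) := by
        rw [dMmap_mul_diagonal_alternate hz]
        simp only [transpose_mul, diagonal_transpose, Matrix.mul_assoc]
    _ = diagonal (Mmap p z) * OmegaSG p 1 * diagonal (Mmap p z) := by
        rw [signedExponentMatrix_mul_OmegaSG_one_mul_transpose, Matrix.mul_neg, Matrix.neg_mul,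
          neg_neg]

/-- `M_p` satisfies `dM_p · Ω^{mk}_p · (dM_p)ᵀ = Ω^{sG}_p|_{f=M_p(z)}`, hence is a Poisson map:
`{g∘M_p, h∘M_p}_z = {g,h}_f` at `f = M_p(z)`. -/
theorem Mmap_poisson (p : ℕ) (z : Fin p → ℝ) (hz : ∀ i, z i ≠ 0) (g h : (Fin p → ℝ) → ℝ)
    (hg : DifferentiableAt ℝ g (Mmap p z)) (hh : DifferentiableAt ℝ h (Mmap p z)) :
    dMmap p z * OmegaMK p z * (dMmap p z)ᵀ = OmegaSG p (Mmap p z) ∧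
    gradBracket (OmegaMK p z) (fun w => g (Mmap p w)) (fun w => h (Mmap p w)) z =
      gradBracket (OmegaSG p (Mmap p z)) g h (Mmap p z) := by
  have hmatrix := dMmap_mul_OmegaMK_mul_transpose hz
  refine ⟨hmatrix, ?_⟩
  rw [gradBracket_comp (hasFDerivAt_Mmap hz) _ hg hh, hmatrix]
end

section
/- With respect to the tridiagonal bracket {·,·}_c, the pKdV multi-sums satisfy {Ψ^{1,p}_r, Ψ^{1,p−1}_{s−1}}_c + {Ψ^{1,p−1}_{r−1}, Ψ^{1,p}_s}_c = Ψ^{1,p}_r Ψ^{1,p−1}_s − Ψ^{1,p}_s Ψ^{1,p−1}_r. -/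
/-!
`Ψ^{1,p}` depends only on `c_1, …, c_{p+1}` and obeys the continuant recurrence
`Ψ^{1,p}_r = c_{p+1} Ψ^{1,p-1}_r + Ψ^{1,p-2}_{r-1}`, so `∂Ψ^{1,p}_r/∂c_{p+1} = Ψ^{1,p-1}_r`.
Expanding brackets by the Leibniz rule along this recurrence, an induction on `p` shows at once
that the `Ψ^{1,p}_r` are in involution and that
`{Ψ^{1,p}_r, Ψ^{1,p-1}_t} = Σ_{a=0}^{r} (Ψ^{1,p}_a Ψ^{1,p-1}_{m-a} - Ψ^{1,p}_{m-a} Ψ^{1,p-1}_a)`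
with `m = r + t + 1`. The summand is odd under `a ↦ m - a`, so the two brackets of the theorem
are partial sums of the same odd sequence, differing exactly by its `r`-th term.
-/

/-- The pKdV multi-sum
`Ψ^{a,b}_r = (Σ_{a ≤ i₁, i_j+1 < i_{j+1}, i_r ≤ b} Π_j f_{i_j}) · Π_{i=a}^{b+1} c_i`,
where `f_i = 1/(c_i c_{i+1})` and the sum ranges over `r` indices in `[a,b]`, pairwise at
distance `≥ 2`.  For `r = 0` this is `Π_{i=a}^{b+1} c_i`, and `Ψ = 0` for `r < 0`. -/
noncomputable def Psi (c : ℤ → ℝ) (a b : ℤ) (r : ℤ) : ℝ :=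
  if 0 ≤ r then
    (∑ s ∈ ((Finset.Icc a b).powersetCard r.toNat).filter
        (fun s => ∀ i ∈ s, ∀ j ∈ s, i < j → i + 2 ≤ j),
      ∏ i ∈ s, (c i * c (i + 1))⁻¹) * ∏ i ∈ Finset.Icc a (b + 1), c i
  else 0

/-- The partial derivative `∂g/∂c_i` of a function of the variables `c : ℤ → ℝ`. -/
noncomputable def pdC (g : (ℤ → ℝ) → ℝ) (i : ℤ) (c : ℤ → ℝ) : ℝ :=
  deriv (fun t => g (Function.update c i t)) (c i)

/-- The tridiagonal constant Poisson bracket on the variables `c_1, …, c_{2n}`: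
`{g,h}_c = Σ_{i=1}^{2n−1} (∂g/∂c_i ∂h/∂c_{i+1} − ∂g/∂c_{i+1} ∂h/∂c_i)`. -/
noncomputable def cBracket (n : ℕ) (g h : (ℤ → ℝ) → ℝ) (c : ℤ → ℝ) : ℝ :=
  ∑ i ∈ Finset.Icc (1 : ℤ) (2 * n - 1),
    (pdC g i c * pdC h (i + 1) c - pdC g (i + 1) c * pdC h i c)

section

open Finset Function

noncomputable def sparseSets (a b : ℤ) (k : ℕ) : Finset (Finset ℤ) :=
  ((Icc a b).powersetCard k).filter (fun s => ∀ i ∈ s, ∀ j ∈ s, i < j → i + 2 ≤ j)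

noncomputable def sparseSum (c : ℤ → ℝ) (a b : ℤ) (k : ℕ) : ℝ :=
  ∑ s ∈ sparseSets a b k, ∏ i ∈ s, (c i * c (i + 1))⁻¹

lemma mem_sparseSets {a b : ℤ} {k : ℕ} {s : Finset ℤ} :
    s ∈ sparseSets a b k ↔
      s ⊆ Icc a b ∧ s.card = k ∧ ∀ i ∈ s, ∀ j ∈ s, i < j → i + 2 ≤ j := by
  simp [sparseSets, and_assoc]

lemma sparseSum_zero (c : ℤ → ℝ) (a b : ℤ) : sparseSum c a b 0 = 1 := by
  simp [sparseSum, sparseSets, filter_singleton]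

lemma sparseSum_succ_of_lt (c : ℤ → ℝ) {a b : ℤ} (h : b < a) (k : ℕ) :
    sparseSum c a b (k + 1) = 0 := by
  rw [sparseSum, sparseSets, Icc_eq_empty_of_lt h, powersetCard_eq_empty.2 (by simp)]
  simp

lemma mem_sparseSets_pred_iff {a p : ℤ} {k : ℕ} {s : Finset ℤ} :
    s ∈ sparseSets a (p - 1) k ↔ s ∈ sparseSets a p k ∧ p ∉ s := by
  simp only [mem_sparseSets, subset_iff, mem_Icc]
  constructor
  · rintro ⟨hsub, hcard, hgap⟩
    refine ⟨⟨fun i hi => ?_, hcard, hgap⟩, fun hp => ?_⟩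
    · have := hsub hi; omega
    · have := hsub hp; omega
  · rintro ⟨⟨hsub, hcard, hgap⟩, hp⟩
    refine ⟨fun i hi => ?_, hcard, hgap⟩
    have : i ≠ p := fun h => hp (h ▸ hi)
    have := hsub hi
    omega

lemma insert_mem_sparseSets {a p : ℤ} (ha : a ≤ p) {k : ℕ} {t : Finset ℤ}
    (ht : t ∈ sparseSets a (p - 2) k) : insert p t ∈ sparseSets a p (k + 1) := by
  rw [mem_sparseSets] at ht ⊢
  obtain ⟨hsub, hcard, hgap⟩ := ht
  have hlt : ∀ i ∈ t, i + 2 ≤ p := fun i hi => by have := (mem_Icc.1 (hsub hi)).2; omega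
  refine ⟨insert_subset (mem_Icc.2 ⟨ha, le_rfl⟩) fun i hi => ?_, ?_, ?_⟩
  · have := mem_Icc.1 (hsub hi); exact mem_Icc.2 ⟨this.1, by omega⟩
  · rw [card_insert_of_notMem fun hp => by linarith [hlt p hp], hcard]
  · simp only [mem_insert]
    rintro i (rfl | hi) j (rfl | hj) hij
    · omega
    · linarith [hlt j hj]
    · exact hlt i hi
    · exact hgap i hi j hj hij

lemma erase_mem_sparseSets {a p : ℤ} {k : ℕ} {s : Finset ℤ}
    (hs : s ∈ sparseSets a p (k + 1)) (hp : p ∈ s) : s.erase p ∈ sparseSets a (p - 2) k := by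
  rw [mem_sparseSets] at hs ⊢
  obtain ⟨hsub, hcard, hgap⟩ := hs
  refine ⟨fun i hi => ?_, by rw [card_erase_of_mem hp, hcard, Nat.add_sub_cancel], ?_⟩
  · obtain ⟨hne, hi⟩ := mem_erase.1 hi
    have hle := mem_Icc.1 (hsub hi)
    have := hgap i hi p hp (lt_of_le_of_ne hle.2 hne)
    exact mem_Icc.2 ⟨hle.1, by omega⟩
  · exact fun i hi j hj => hgap i (mem_of_mem_erase hi) j (mem_of_mem_erase hj)

/-- The sparse sets in `[a, p]` either avoid `p` or arise by adding `p` to a sparse set in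
`[a, p - 2]`. -/
lemma sparseSum_succ (c : ℤ → ℝ) {a p : ℤ} (ha : a ≤ p) (k : ℕ) :
    sparseSum c a p (k + 1) =
      sparseSum c a (p - 1) (k + 1) + (c p * c (p + 1))⁻¹ * sparseSum c a (p - 2) k := by
  rw [sparseSum, ← sum_filter_not_add_sum_filter _ (p ∈ ·)]
  congr 1
  · exact sum_congr (by ext; simp [mem_sparseSets_pred_iff]) fun _ _ => rfl
  · rw [sparseSum, mul_sum]
    refine sum_nbij' (·.erase p) (insert p) (fun s hs => ?_) (fun t ht => ?_)
      (fun s hs => ?_) (fun t ht => ?_) (fun s hs => ?_)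
    · obtain ⟨hs, hp⟩ := mem_filter.1 hs
      exact erase_mem_sparseSets hs hp
    · exact mem_filter.2 ⟨insert_mem_sparseSets ha ht, mem_insert_self p t⟩
    · exact insert_erase (mem_filter.1 hs).2
    · exact erase_insert fun hp => by
        linarith [(mem_Icc.1 ((mem_sparseSets.1 ht).1 hp)).2]
    · exact (mul_prod_erase s _ (mem_filter.1 hs).2).symm

lemma prod_Icc_add_one_right (c : ℤ → ℝ) {a b : ℤ} (h : a ≤ b + 1) :
    ∏ i ∈ Icc a (b + 1), c i = (∏ i ∈ Icc a b, c i) * c (b + 1) := by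
  rw [← insert_Icc_right_eq_Icc_add_one h, prod_insert (by simp), mul_comm]

lemma Psi_of_neg (c : ℤ → ℝ) (a b : ℤ) {r : ℤ} (h : r < 0) : Psi c a b r = 0 :=
  if_neg h.not_ge

lemma Psi_natCast (c : ℤ → ℝ) (a b : ℤ) (k : ℕ) :
    Psi c a b k = sparseSum c a b k * ∏ i ∈ Icc a (b + 1), c i := by
  simp [Psi, sparseSum, sparseSets]

lemma Psi_of_lt (c : ℤ → ℝ) {a b : ℤ} (h : b < a) (r : ℤ) :
    Psi c a b r = if r = 0 then ∏ i ∈ Icc a (b + 1), c i else 0 := by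
  rcases lt_or_ge r 0 with hr | hr
  · rw [Psi_of_neg c a b hr, if_neg hr.ne]
  obtain ⟨k, rfl⟩ := Int.eq_ofNat_of_zero_le hr
  cases k with
  | zero => rw [Psi_natCast, sparseSum_zero]; simp
  | succ k => rw [Psi_natCast, sparseSum_succ_of_lt c h, zero_mul, if_neg (by omega)]

lemma Psi_eq_mul_add (c : ℤ → ℝ) {a p : ℤ} (ha : a ≤ p) (hp : c p ≠ 0)
    (hp' : c (p + 1) ≠ 0) (r : ℤ) :
    Psi c a p r = c (p + 1) * Psi c a (p - 1) r + Psi c a (p - 2) (r - 1) := by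
  rcases lt_or_ge r 0 with hr | hr
  · simp [Psi_of_neg c a _ hr, Psi_of_neg c a _ (show r - 1 < 0 by omega)]
  have hprod : ∏ i ∈ Icc a p, c i = (∏ i ∈ Icc a (p - 1), c i) * c p := by
    simpa using prod_Icc_add_one_right c (b := p - 1) (by omega)
  obtain ⟨k, rfl⟩ := Int.eq_ofNat_of_zero_le hr
  cases k with
  | zero =>
    rw [Psi_of_neg c a (p - 2) (by omega), Psi_natCast, Psi_natCast, sparseSum_zero,
      sparseSum_zero, prod_Icc_add_one_right c (by omega), sub_add_cancel]
    ring
  | succ k =>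
    rw [show ((k + 1 : ℕ) : ℤ) - 1 = k by push_cast; ring, Psi_natCast, Psi_natCast,
      Psi_natCast, sparseSum_succ c ha, prod_Icc_add_one_right c (by omega), sub_add_cancel, hprod,
      show p - 2 + 1 = p - 1 by ring]
    field_simp

lemma Psi_update_of_lt (c : ℤ → ℝ) (a b : ℤ) {i : ℤ} (h : b + 1 < i) (t : ℝ) (r : ℤ) :
    Psi (update c i t) a b r = Psi c a b r := by
  have hc : ∀ j ≤ b + 1, update c i t j = c j := fun j hj => update_of_ne (by omega) t c
  unfold Psi
  split_ifs
  · congr 1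
    · refine sum_congr rfl fun s hs => prod_congr rfl fun j hj => ?_
      have := (mem_Icc.1 ((mem_sparseSets.1 hs).1 hj)).2
      rw [hc j (by omega), hc (j + 1) (by omega)]
    · exact prod_congr rfl fun j hj => hc j (mem_Icc.1 hj).2
  · rfl

def CoordDifferentiableAt (g : (ℤ → ℝ) → ℝ) (c : ℤ → ℝ) : Prop :=
  ∀ i, DifferentiableAt ℝ (fun t => g (update c i t)) (c i)

lemma differentiable_update_apply (c : ℤ → ℝ) (i j : ℤ) :
    Differentiable ℝ (fun t : ℝ => update c i t j) := by
  rcases eq_or_ne j i with rfl | h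
  · simp
  · simp [update_of_ne h]

lemma coordDifferentiableAt_Psi {c : ℤ → ℝ} (hc : ∀ j, c j ≠ 0) (a b r : ℤ) :
    CoordDifferentiableAt (fun c => Psi c a b r) c := by
  intro i
  have hu : ∀ j, DifferentiableAt ℝ (fun t : ℝ => update c i t j) (c i) :=
    fun j => (differentiable_update_apply c i j).differentiableAt
  have hne : ∀ j, update c i (c i) j ≠ 0 := by simpa using hc
  unfold Psi
  split_ifs
  · refine .mul (.fun_sum fun s _ => .fun_finsetProd fun j _ => ?_)
      (.fun_finsetProd fun j _ => hu j)
    exact ((hu j).mul (hu (j + 1))).inv (mul_ne_zero (hne j) (hne (j + 1)))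
  · exact differentiableAt_const 0

lemma pdC_eq_zero_of_update {g : (ℤ → ℝ) → ℝ} {i : ℤ} {c : ℤ → ℝ}
    (h : ∀ t, g (update c i t) = g c) : pdC g i c = 0 := by
  simp [pdC, h]

lemma pdC_coord (j i : ℤ) (c : ℤ → ℝ) :
    pdC (fun c => c j) i c = if j = i then 1 else 0 := by
  split_ifs with h
  · subst h
    simp [pdC]
  · exact pdC_eq_zero_of_update fun t => update_of_ne h t c

lemma pdC_add {g h : (ℤ → ℝ) → ℝ} {c : ℤ → ℝ} (hg : CoordDifferentiableAt g c)
    (hh : CoordDifferentiableAt h c) (i : ℤ) :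
    pdC (fun c => g c + h c) i c = pdC g i c + pdC h i c :=
  deriv_add (hg i) (hh i)

lemma pdC_mul {g h : (ℤ → ℝ) → ℝ} {c : ℤ → ℝ} (hg : CoordDifferentiableAt g c)
    (hh : CoordDifferentiableAt h c) (i : ℤ) :
    pdC (fun c => g c * h c) i c = pdC g i c * h c + g c * pdC h i c := by
  simp only [pdC]
  rw [deriv_fun_mul (hg i) (hh i), update_eq_self]

lemma CoordDifferentiableAt.mul {g h : (ℤ → ℝ) → ℝ} {c : ℤ → ℝ}
    (hg : CoordDifferentiableAt g c) (hh : CoordDifferentiableAt h c) :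
    CoordDifferentiableAt (fun c => g c * h c) c :=
  fun i => (hg i).mul (hh i)

lemma coordDifferentiableAt_coord (j : ℤ) (c : ℤ → ℝ) :
    CoordDifferentiableAt (fun c => c j) c :=
  fun i => (differentiable_update_apply c i j).differentiableAt

lemma update_ne_zero {c : ℤ → ℝ} (hc : ∀ j, c j ≠ 0) {i : ℤ} {t : ℝ} (ht : t ≠ 0)
    (j : ℤ) : update c i t j ≠ 0 := by
  rcases eq_or_ne j i with rfl | hj
  · rwa [update_self]
  · rw [update_of_ne hj]; exact hc j

/-- Points with all coordinates nonzero form a neighbourhood of `c` along each coordinate line. -/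
lemma pdC_congr {g g' : (ℤ → ℝ) → ℝ} {c : ℤ → ℝ} (hc : ∀ j, c j ≠ 0)
    (H : ∀ c', (∀ j, c' j ≠ 0) → g c' = g' c') (i : ℤ) : pdC g i c = pdC g' i c := by
  refine Filter.EventuallyEq.deriv_eq ?_
  filter_upwards [eventually_ne_nhds (hc i)] with t ht
  exact H _ (update_ne_zero hc ht)

lemma pdC_Psi_of_lt (c : ℤ → ℝ) (a b r : ℤ) {i : ℤ} (h : b + 1 < i) :
    pdC (fun c => Psi c a b r) i c = 0 :=
  pdC_eq_zero_of_update fun t => Psi_update_of_lt c a b h t r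

/-- `Ψ^{a,b}_r` is affine in its last variable `c_{b+1}`, with slope `Ψ^{a,b-1}_r`. -/
lemma pdC_Psi_top {c : ℤ → ℝ} (hc : ∀ j, c j ≠ 0) {a b : ℤ} (hab : a ≤ b + 1) (r : ℤ) :
    pdC (fun c => Psi c a b r) (b + 1) c = Psi c a (b - 1) r := by
  obtain ⟨K, hK⟩ :
      ∃ K, ∀ t ≠ 0, Psi (update c (b + 1) t) a b r = t * Psi c a (b - 1) r + K := by
    rcases eq_or_lt_of_le hab with rfl | hlt
    · refine ⟨0, fun t _ => ?_⟩
      rw [Psi_of_lt _ (by omega), Psi_of_lt _ (by omega), sub_add_cancel, Icc_self,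
        prod_singleton, update_self, Icc_eq_empty_of_lt (lt_add_one b), prod_empty]
      split_ifs <;> simp
    · refine ⟨Psi c a (b - 2) (r - 1), fun t ht => ?_⟩
      have hne := update_ne_zero (i := b + 1) hc ht
      rw [Psi_eq_mul_add _ (by omega) (hne b) (hne (b + 1)), update_self,
        Psi_update_of_lt c a _ (by omega), Psi_update_of_lt c a _ (by omega)]
  have hline : (fun t => Psi (update c (b + 1) t) a b r) =ᶠ[nhds (c (b + 1))]
      fun t => t * Psi c a (b - 1) r + K := by
    filter_upwards [eventually_ne_nhds (hc (b + 1))] with t ht using hK t ht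
  rw [pdC, hline.deriv_eq]
  simp

lemma cBracket_swap (n : ℕ) (g h : (ℤ → ℝ) → ℝ) (c : ℤ → ℝ) :
    cBracket n g h c = -cBracket n h g c := by
  rw [cBracket, cBracket, ← sum_neg_distrib]
  exact sum_congr rfl fun i _ => by ring

lemma cBracket_self (n : ℕ) (g : (ℤ → ℝ) → ℝ) (c : ℤ → ℝ) : cBracket n g g c = 0 := by
  linarith [cBracket_swap n g g c]

lemma cBracket_congr_left {g g' : (ℤ → ℝ) → ℝ} {c : ℤ → ℝ} (hc : ∀ j, c j ≠ 0)
    (H : ∀ c', (∀ j, c' j ≠ 0) → g c' = g' c') (n : ℕ) (h : (ℤ → ℝ) → ℝ) :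
    cBracket n g h c = cBracket n g' h c :=
  sum_congr rfl fun i _ => by rw [pdC_congr hc H i, pdC_congr hc H (i + 1)]

lemma cBracket_add_left {g₁ g₂ : (ℤ → ℝ) → ℝ} {c : ℤ → ℝ}
    (hg₁ : CoordDifferentiableAt g₁ c) (hg₂ : CoordDifferentiableAt g₂ c) (n : ℕ)
    (h : (ℤ → ℝ) → ℝ) :
    cBracket n (fun c => g₁ c + g₂ c) h c = cBracket n g₁ h c + cBracket n g₂ h c := by
  rw [cBracket, cBracket, cBracket, ← sum_add_distrib]
  exact sum_congr rfl fun i _ => by rw [pdC_add hg₁ hg₂, pdC_add hg₁ hg₂]; ring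

lemma cBracket_mul_left {g₁ g₂ : (ℤ → ℝ) → ℝ} {c : ℤ → ℝ}
    (hg₁ : CoordDifferentiableAt g₁ c) (hg₂ : CoordDifferentiableAt g₂ c) (n : ℕ)
    (h : (ℤ → ℝ) → ℝ) :
    cBracket n (fun c => g₁ c * g₂ c) h c =
      g₁ c * cBracket n g₂ h c + g₂ c * cBracket n g₁ h c := by
  rw [cBracket, cBracket, cBracket, mul_sum, mul_sum, ← sum_add_distrib]
  exact sum_congr rfl fun i _ => by rw [pdC_mul hg₁ hg₂, pdC_mul hg₁ hg₂]; ring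

lemma cBracket_coord_left (n : ℕ) (j : ℤ) (h : (ℤ → ℝ) → ℝ) (c : ℤ → ℝ) :
    cBracket n (fun c => c j) h c =
      (if j ∈ Icc 1 (2 * (n : ℤ) - 1) then pdC h (j + 1) c else 0) -
        if j - 1 ∈ Icc 1 (2 * (n : ℤ) - 1) then pdC h (j - 1) c else 0 := by
  rw [cBracket, ← sum_ite_eq' _ j (fun i => pdC h (i + 1) c),
    ← sum_ite_eq' _ (j - 1) (fun i => pdC h i c), ← sum_sub_distrib]
  refine sum_congr rfl fun i _ => ?_
  simp only [pdC_coord]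
  split_ifs <;> first | omega | ring

lemma cBracket_Psi_Psi_of_nonpos (n : ℕ) (c : ℤ → ℝ) {p q : ℤ} (hp : p ≤ 0) (hq : q ≤ 0)
    (r s : ℤ) : cBracket n (fun c => Psi c 1 p r) (fun c => Psi c 1 q s) c = 0 :=
  sum_eq_zero fun i hi => by
    have := (mem_Icc.1 hi).1
    rw [pdC_Psi_of_lt c 1 p r (by omega : p + 1 < i + 1),
      pdC_Psi_of_lt c 1 q s (by omega : q + 1 < i + 1)]
    ring

lemma cBracket_coord_Psi_pred {n : ℕ} {c : ℤ → ℝ} (hc : ∀ j, c j ≠ 0) {p : ℤ} (hp1 : 1 ≤ p)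
    (hpn : p ≤ 2 * (n : ℤ) - 1) (t : ℤ) :
    cBracket n (fun c => c (p + 1)) (fun c => Psi c 1 (p - 1) t) c = -Psi c 1 (p - 2) t := by
  have htop := pdC_Psi_top hc (show 1 ≤ p - 1 + 1 by omega) t
  rw [sub_add_cancel, show p - 1 - 1 = p - 2 by ring] at htop
  rw [cBracket_coord_left, pdC_Psi_of_lt c 1 (p - 1) t (by omega), add_sub_cancel_right,
    htop, if_pos (mem_Icc.2 ⟨hp1, hpn⟩)]
  simp

lemma cBracket_coord_Psi_sub_two (n : ℕ) (c : ℤ → ℝ) (p t : ℤ) :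
    cBracket n (fun c => c (p + 1)) (fun c => Psi c 1 (p - 2) t) c = 0 := by
  rw [cBracket_coord_left, pdC_Psi_of_lt c 1 (p - 2) t (by omega), add_sub_cancel_right,
    pdC_Psi_of_lt c 1 (p - 2) t (by omega)]
  simp

lemma cBracket_Psi_left_eq_add {c : ℤ → ℝ} (hc : ∀ j, c j ≠ 0) {p : ℤ} (hp : 1 ≤ p) (n : ℕ)
    (r : ℤ) (h : (ℤ → ℝ) → ℝ) :
    cBracket n (fun c => Psi c 1 p r) h c =
      c (p + 1) * cBracket n (fun c => Psi c 1 (p - 1) r) h c +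
        Psi c 1 (p - 1) r * cBracket n (fun c => c (p + 1)) h c +
          cBracket n (fun c => Psi c 1 (p - 2) (r - 1)) h c := by
  have hΨ := coordDifferentiableAt_Psi hc 1
  rw [cBracket_congr_left hc (fun c' hc' => Psi_eq_mul_add c' hp (hc' p) (hc' (p + 1)) r),
    cBracket_add_left ((coordDifferentiableAt_coord _ c).mul (hΨ _ r)) (hΨ _ _),
    cBracket_mul_left (coordDifferentiableAt_coord _ c) (hΨ _ r)]

lemma eq_of_forall_eq_sub_one {β : Type*} {A : ℤ → β} (h : ∀ u, A u = A (u - 1)) (u v : ℤ) :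
    A u = A v := by
  have hper : Function.Periodic A 1 := fun u => by rw [h (u + 1), add_sub_cancel_right]
  simpa using (hper.int_mul_eq u).trans (hper.int_mul_eq v).symm

lemma sum_Icc_zero_eq_add {φ : ℤ → ℝ} (hφ : ∀ x < 0, φ x = 0) (u : ℤ) :
    ∑ x ∈ Icc 0 u, φ x = ∑ x ∈ Icc 0 (u - 1), φ x + φ u := by
  rcases lt_or_ge u 0 with hu | hu
  · rw [Icc_eq_empty_of_lt hu, Icc_eq_empty_of_lt (by omega), hφ u hu]
    simp
  · have : Icc 0 u = insert u (Icc 0 (u - 1)) := by ext; simp; omega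
    rw [this, sum_insert (by simp), add_comm]

/-- By oddness, `u ↦ S u - S (m - 1 - u)` is constant (`S` the partial sums from `0`); it is also
odd under `u ↦ m - 1 - u`, hence zero. -/
lemma sum_Icc_zero_eq_of_antisymm {φ : ℤ → ℝ} {m : ℤ} (hφ : ∀ x < 0, φ x = 0)
    (hanti : ∀ x, φ (m - x) = -φ x) {u v : ℤ} (huv : u + v + 1 = m) :
    ∑ x ∈ Icc 0 u, φ x = ∑ x ∈ Icc 0 v, φ x := by
  set D : ℤ → ℝ := fun u => ∑ x ∈ Icc 0 u, φ x - ∑ x ∈ Icc 0 (m - 1 - u), φ x with hD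
  have hstep : ∀ u, D u = D (u - 1) := fun u => by
    simp only [hD]
    rw [sum_Icc_zero_eq_add hφ u, sum_Icc_zero_eq_add hφ (m - 1 - (u - 1)),
      show m - 1 - (u - 1) - 1 = m - 1 - u by ring, show m - 1 - (u - 1) = m - u by ring,
      hanti]
    ring
  have hD0 : D 0 = 0 := by
    have h := eq_of_forall_eq_sub_one hstep (m - 1) 0
    simp only [hD, sub_self, sub_zero] at h ⊢
    linarith
  have := eq_of_forall_eq_sub_one hstep u 0
  rw [hD0] at this
  simp only [hD, show m - 1 - u = v by omega] at this
  linarith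

def crossTerm (F G : ℤ → ℝ) (m x : ℤ) : ℝ := F x * G (m - x) - F (m - x) * G x

noncomputable def crossSum (F G : ℤ → ℝ) (r t : ℤ) : ℝ :=
  ∑ a ∈ Icc 0 r, crossTerm F G (r + t + 1) a

lemma crossTerm_of_neg {F G : ℤ → ℝ} (hF : ∀ x < 0, F x = 0) (hG : ∀ x < 0, G x = 0) (m : ℤ)
    {x : ℤ} (hx : x < 0) : crossTerm F G m x = 0 := by
  simp [crossTerm, hF x hx, hG x hx]

lemma crossSum_eq_sum_Icc_right {F G : ℤ → ℝ} (hF : ∀ x < 0, F x = 0) (hG : ∀ x < 0, G x = 0)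
    (r t : ℤ) :
    crossSum F G r t = ∑ a ∈ Icc 0 t, crossTerm F G (r + t + 1) a :=
  sum_Icc_zero_eq_of_antisymm (fun x => crossTerm_of_neg hF hG _)
    (fun x => by simp only [crossTerm, sub_sub_cancel]; ring) rfl

lemma crossSum_sub_crossSum {F G : ℤ → ℝ} (hF : ∀ x < 0, F x = 0) (hG : ∀ x < 0, G x = 0)
    (r s : ℤ) :
    crossSum F G r (s - 1) - crossSum F G s (r - 1) = F r * G s - F s * G r := by
  rw [crossSum, crossSum_eq_sum_Icc_right hF hG,
    show r + (s - 1) + 1 = s + (r - 1) + 1 by ring,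
    sum_Icc_zero_eq_add fun x => crossTerm_of_neg hF hG _, add_sub_cancel_left, crossTerm,
    show s + (r - 1) + 1 - r = s by ring]

/-- With `m = r + t` fixed, both sides, as functions of `r`, vanish for `r < 0` and change by the
same amount from `r - 1` to `r`. -/
lemma crossSum_of_eq_add {F G H : ℤ → ℝ} {κ : ℝ} (hFGH : ∀ x, F x = κ * G x + H (x - 1))
    (hG : ∀ x < 0, G x = 0) (hH : ∀ x < 0, H x = 0) (r t : ℤ) :
    crossSum F G r t = -(G r * H t) - crossSum G H t (r - 1) := by
  have hF : ∀ x < 0, F x = 0 := fun x hx => by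
    rw [hFGH, hG x hx, hH _ (by omega), mul_zero, add_zero]
  set m := r + t
  set A : ℤ → ℝ := fun u => ∑ a ∈ Icc 0 u, crossTerm F G (m + 1) a + G u * H (m - u) +
    ∑ a ∈ Icc 0 (u - 1), crossTerm G H m a with hA
  have hstep : ∀ u, A u = A (u - 1) := fun u => by
    simp only [hA]
    rw [sum_Icc_zero_eq_add (fun x => crossTerm_of_neg hF hG _) u,
      sum_Icc_zero_eq_add (fun x => crossTerm_of_neg hG hH _) (u - 1)]
    simp only [crossTerm, hFGH]
    rw [show m + 1 - u - 1 = m - u by ring, show m - (u - 1) = m + 1 - u by ring]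
    ring
  have hA0 : A (-1) = 0 := by
    simp only [hA, hG (-1) (by norm_num), zero_mul, add_zero]
    rw [Icc_eq_empty_of_lt (by norm_num), Icc_eq_empty_of_lt (by norm_num), sum_empty,
      sum_empty, add_zero]
  have := (eq_of_forall_eq_sub_one hstep r (-1)).trans hA0
  rw [crossSum_eq_sum_Icc_right hG hH, show t + (r - 1) + 1 = m by ring, crossSum,
    show r + t + 1 = m + 1 from rfl]
  simp only [hA, show m - r = t by ring] at this
  linarith

def PsiBracketCrossSum (n : ℕ) (c : ℤ → ℝ) (p : ℤ) : Prop :=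
  ∀ r t, cBracket n (fun c => Psi c 1 p r) (fun c => Psi c 1 (p - 1) t) c =
    crossSum (Psi c 1 p) (Psi c 1 (p - 1)) r t

def PsiInInvolution (n : ℕ) (c : ℤ → ℝ) (p : ℤ) : Prop :=
  ∀ r s, cBracket n (fun c => Psi c 1 p r) (fun c => Psi c 1 p s) c = 0

section induction

variable {n : ℕ} {c : ℤ → ℝ} {p : ℤ}

lemma crossSum_Psi_eq_sub (hc : ∀ j, c j ≠ 0) (hp : 1 ≤ p) (r t : ℤ) :
    crossSum (Psi c 1 p) (Psi c 1 (p - 1)) r t =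
      -(Psi c 1 (p - 1) r * Psi c 1 (p - 2) t) -
        crossSum (Psi c 1 (p - 1)) (Psi c 1 (p - 2)) t (r - 1) :=
  crossSum_of_eq_add (Psi_eq_mul_add c hp (hc p) (hc (p + 1))) (fun _ => Psi_of_neg c 1 _)
    (fun _ => Psi_of_neg c 1 _) r t

lemma psiBracketCrossSum_of_nonpos (hp : p ≤ 0) : PsiBracketCrossSum n c p := fun r t => by
  rw [cBracket_Psi_Psi_of_nonpos n c hp (by omega), crossSum, eq_comm]
  refine sum_eq_zero fun a _ => ?_
  simp only [crossTerm, Psi_of_lt c (show p < 1 by omega),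
    Psi_of_lt c (show p - 1 < 1 by omega)]
  split_ifs <;> ring

lemma psiBracketCrossSum_of_pred (hc : ∀ j, c j ≠ 0) (hp1 : 1 ≤ p) (hpn : p ≤ 2 * (n : ℤ) - 1)
    (hE : PsiInInvolution n c (p - 1)) (hD : PsiBracketCrossSum n c (p - 1)) :
    PsiBracketCrossSum n c p := fun r t => by
  unfold PsiBracketCrossSum at hD
  rw [show p - 1 - 1 = p - 2 by ring] at hD
  rw [cBracket_Psi_left_eq_add hc hp1, hE, cBracket_coord_Psi_pred hc hp1 hpn, cBracket_swap,
    hD, crossSum_Psi_eq_sub hc hp1]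
  ring

lemma psiInInvolution_of_pred (hc : ∀ j, c j ≠ 0) (hp1 : 1 ≤ p) (hpn : p ≤ 2 * (n : ℤ) - 1)
    (hD : PsiBracketCrossSum n c p) (hD' : PsiBracketCrossSum n c (p - 1))
    (hE : PsiInInvolution n c (p - 2)) : PsiInInvolution n c p := fun r s => by
  unfold PsiBracketCrossSum at hD'
  rw [show p - 1 - 1 = p - 2 by ring] at hD'
  have h₁ : cBracket n (fun c => Psi c 1 (p - 1) r) (fun c => Psi c 1 p s) c =
      -crossSum (Psi c 1 p) (Psi c 1 (p - 1)) s r := by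
    rw [cBracket_swap, hD]
  have h₂ : cBracket n (fun c => c (p + 1)) (fun c => Psi c 1 p s) c =
      -(c (p + 1) * Psi c 1 (p - 2) s) := by
    rw [cBracket_swap, cBracket_Psi_left_eq_add hc hp1,
      cBracket_swap _ (fun c => Psi c 1 (p - 1) s), cBracket_coord_Psi_pred hc hp1 hpn,
      cBracket_self, cBracket_swap _ (fun c => Psi c 1 (p - 2) (s - 1)),
      cBracket_coord_Psi_sub_two]
    ring
  have h₃ : cBracket n (fun c => Psi c 1 (p - 2) (r - 1)) (fun c => Psi c 1 p s) c =
      -(c (p + 1) * crossSum (Psi c 1 (p - 1)) (Psi c 1 (p - 2)) s (r - 1)) := by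
    rw [cBracket_swap, cBracket_Psi_left_eq_add hc hp1, hD', cBracket_coord_Psi_sub_two, hE]
    ring
  rw [cBracket_Psi_left_eq_add hc hp1, h₁, h₂, h₃, crossSum_Psi_eq_sub hc hp1]
  linear_combination c (p + 1) *
    crossSum_sub_crossSum (fun _ => Psi_of_neg c 1 (p - 1)) (fun _ => Psi_of_neg c 1 (p - 2)) r s

lemma psiBracketCrossSum_of_le (hc : ∀ j, c j ≠ 0) (hpn : p ≤ 2 * (n : ℤ) - 1) :
    PsiBracketCrossSum n c p := by
  rcases le_or_gt p 0 with hp | hp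
  · exact psiBracketCrossSum_of_nonpos hp
  suffices ∀ q, 0 ≤ q → q ≤ 2 * (n : ℤ) - 1 →
      PsiBracketCrossSum n c q ∧ PsiInInvolution n c q ∧ PsiInInvolution n c (q - 1) from
    (this p hp.le hpn).1
  intro q hq
  induction q, hq using Int.leInduction with
  | base => exact fun _ => ⟨psiBracketCrossSum_of_nonpos le_rfl,
      cBracket_Psi_Psi_of_nonpos n c le_rfl le_rfl,
      cBracket_Psi_Psi_of_nonpos n c (by omega) (by omega)⟩
  | succ q hq ih =>
    intro hqn
    obtain ⟨hD, hE, hE'⟩ := ih (by omega)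
    rw [← add_sub_cancel_right q 1] at hD hE
    have hD₁ := psiBracketCrossSum_of_pred hc (by omega) hqn hE hD
    rw [show q - 1 = q + 1 - 2 by ring] at hE'
    exact ⟨hD₁, psiInInvolution_of_pred hc (by omega) hqn hD₁ hD hE', hE⟩

end induction

end

theorem psi_bracket_shift_general (n : ℕ) (p : ℤ) (hp : p ≤ 2 * n - 1)
    (c : ℤ → ℝ) (hc : ∀ i, c i ≠ 0) (r s : ℤ) :
    cBracket n (fun c => Psi c 1 p r) (fun c => Psi c 1 (p - 1) (s - 1)) c +
      cBracket n (fun c => Psi c 1 (p - 1) (r - 1)) (fun c => Psi c 1 p s) c =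
    Psi c 1 p r * Psi c 1 (p - 1) s - Psi c 1 p s * Psi c 1 (p - 1) r := by
  have hD := psiBracketCrossSum_of_le hc hp
  rw [hD r (s - 1), cBracket_swap, hD s (r - 1), ← sub_eq_add_neg]
  exact crossSum_sub_crossSum (fun _ => Psi_of_neg c 1 p) (fun _ => Psi_of_neg c 1 (p - 1)) r s

/-- `{Ψ^{1,p}_r, Ψ^{1,p−1}_{s−1}}_c + {Ψ^{1,p−1}_{r−1}, Ψ^{1,p}_s}_c
  = Ψ^{1,p}_r Ψ^{1,p−1}_s − Ψ^{1,p}_s Ψ^{1,p−1}_r`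
(variables `c_1, …, c_{2n}`, `p ≤ 2n − 1`). -/
theorem psi_bracket_shift (n : ℕ) (p : ℤ) (hp1 : 1 ≤ p) (hp : p ≤ 2 * n - 1)
    (c : ℤ → ℝ) (hc : ∀ i, c i ≠ 0) (r s : ℤ)
    (hr0 : 0 ≤ r) (hr : r ≤ (p + 1) / 2) (hs0 : 0 ≤ s) (hs : s ≤ (p + 1) / 2) :
    cBracket n (fun c => Psi c 1 p r) (fun c => Psi c 1 (p - 1) (s - 1)) c +
      cBracket n (fun c => Psi c 1 (p - 1) (r - 1)) (fun c => Psi c 1 p s) c =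
    Psi c 1 p r * Psi c 1 (p - 1) s - Psi c 1 p s * Psi c 1 (p - 1) r :=
  psi_bracket_shift_general n p hp c hc r s
end
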